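/- Let n > k ≥ 1 and let λ_1 ≥ λ_2 ≥ ⋯ ≥ λ_n = 0 be integers with λ_k ≥ 2. Then ∏ (λ_i − λ_j + j − i)/(j − i), the product taken over all pairs (i,j) with 1 ≤ i ≤ k < j ≤ n, is at least n(n+1)/((n−k)(n−k+1)). -/

import Mathlib

/-!
Every factor is at least `1`, since `λ` is antitone, so the product is at least its
subproduct over the column `j = n`. There `λ_n = 0` and `λ_i ≥ λ_k ≥ 2` give
`(λ_i + n - i)/(n - i) ≥ (n - i + 2)/(n - i)`, and the product of these lower bounds
over `i = 1, …, k` telescopes to `n(n+1)/((n-k)(n-k+1))`.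
-/

open Finset

def weylFactor (lam : ℕ → ℕ) (i j : ℕ) : ℚ :=
  ((lam i : ℚ) - lam j + j - i) / (j - i)

lemma one_le_weylFactor {lam : ℕ → ℕ} {i j : ℕ} (hij : i < j) (hlam : lam j ≤ lam i) :
    1 ≤ weylFactor lam i j := by
  have hd : (0 : ℚ) < j - i := sub_pos.2 (by exact_mod_cast hij)
  have hlamQ : (lam j : ℚ) ≤ lam i := by exact_mod_cast hlam
  rw [weylFactor, one_le_div hd]
  linarith

lemma le_weylFactor_of_add_two_le {lam : ℕ → ℕ} {i j : ℕ} (hij : i < j)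
    (hlam : lam j + 2 ≤ lam i) : ((j : ℚ) - i + 2) / (j - i) ≤ weylFactor lam i j := by
  have hd : (0 : ℚ) < j - i := sub_pos.2 (by exact_mod_cast hij)
  have hlamQ : (lam j : ℚ) + 2 ≤ lam i := by exact_mod_cast hlam
  rw [weylFactor]
  gcongr
  linarith

lemma prod_Icc_sub_add_two_div_sub {K : Type*} [Field K] [CharZero K] {n k : ℕ} (hkn : k < n) :
    ∏ i ∈ Icc 1 k, ((n : K) - i + 2) / (n - i) = n * (n + 1) / ((n - k) * (n - k + 1)) := by
  induction k with
  | zero =>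
    have hn : (n : K) ≠ 0 := by exact_mod_cast (by omega : n ≠ 0)
    have hn' : (n : K) + 1 ≠ 0 := by exact_mod_cast n.succ_ne_zero
    simp [hn, hn']
  | succ k ih =>
    rw [prod_Icc_succ_top (by omega), ih (by omega)]
    have hk : (n : K) - k ≠ 0 := sub_ne_zero.2 (by exact_mod_cast (by omega : n ≠ k))
    have hk' : (n : K) - (k + 1) ≠ 0 := sub_ne_zero.2 (by exact_mod_cast (by omega : n ≠ k + 1))
    have hk'' : (n : K) - k + 1 ≠ 0 := by
      rw [sub_add_eq_add_sub]; exact sub_ne_zero.2 (by exact_mod_cast (by omega : n + 1 ≠ k))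
    have hcancel : (n : K) - (k + 1) + 2 = n - k + 1 := by ring
    have hshift : (n : K) - (k + 1) + 1 = n - k := by ring
    push_cast
    rw [hcancel, hshift, div_mul_div_comm,
      div_eq_div_iff (mul_ne_zero (mul_ne_zero hk hk'') hk') (mul_ne_zero hk' hk)]
    ring

theorem weyl_product_bound_lambda_k_ge_two_general (n k : ℕ) (lam : ℕ → ℕ)
    (hkn : k < n)
    (hmono : ∀ i, 1 ≤ i → i < n → lam (i + 1) ≤ lam i)
    (hlast : lam n = 0) (h2 : 2 ≤ lam k) :
    ((n : ℚ) * ((n : ℚ) + 1)) / (((n : ℚ) - (k : ℚ)) * ((n : ℚ) - (k : ℚ) + 1)) ≤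
      ∏ p ∈ Finset.Icc 1 k ×ˢ Finset.Icc (k + 1) n,
        (((lam p.1 : ℚ) - (lam p.2 : ℚ) + (p.2 : ℚ) - (p.1 : ℚ)) /
          ((p.2 : ℚ) - (p.1 : ℚ))) := by
  have hanti : AntitoneOn lam (Set.Icc 1 n) :=
    antitoneOn_of_succ_le Set.ordConnected_Icc fun a _ ha hsucc => by
      rw [Order.succ_eq_add_one] at hsucc ⊢
      exact hmono a ha.1 (by simp only [Set.mem_Icc] at hsucc; omega)
  calc ((n : ℚ) * (n + 1)) / ((n - k) * (n - k + 1))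
      = ∏ i ∈ Icc 1 k, ((n : ℚ) - i + 2) / (n - i) := (prod_Icc_sub_add_two_div_sub hkn).symm
    _ ≤ ∏ i ∈ Icc 1 k, weylFactor lam i n := by
      refine prod_le_prod (fun i hi => ?_) fun i hi => ?_
      · have : (i : ℚ) < n := by rw [mem_Icc] at hi; exact_mod_cast (by omega : i < n)
        exact div_nonneg (by linarith) (by linarith)
      · rw [mem_Icc] at hi
        refine le_weylFactor_of_add_two_le (by omega) ?_
        have : lam k ≤ lam i := hanti ⟨hi.1, by omega⟩ ⟨by omega, hkn.le⟩ hi.2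
        omega
    _ = ∏ p ∈ Icc 1 k ×ˢ {n}, weylFactor lam p.1 p.2 := by
      rw [prod_product]; simp only [prod_singleton]
    _ ≤ ∏ p ∈ Icc 1 k ×ˢ Icc (k + 1) n, weylFactor lam p.1 p.2 := by
      refine prod_le_prod_of_subset_of_one_le (product_subset_product_right
        (singleton_subset_iff.2 (mem_Icc.2 ⟨hkn, le_rfl⟩)))
        (fun p hp => zero_le_one.trans ?_) fun p hp _ => ?_ <;>
      · simp only [mem_product, mem_Icc, mem_singleton] at hp
        exact one_le_weylFactor (by omega) (hanti ⟨hp.1.1, by omega⟩ ⟨by omega, by omega⟩ (by omega))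

/-- Weyl dimension-type estimate: if `λ_1 ≥ λ_2 ≥ ⋯ ≥ λ_n = 0` with `λ_k ≥ 2`
(`1 ≤ k < n`), then
`∏_{1 ≤ i ≤ k < j ≤ n} (λ_i - λ_j + j - i)/(j - i) ≥ n(n+1)/((n-k)(n-k+1))`. -/
theorem weyl_product_bound_lambda_k_ge_two (n k : ℕ) (lam : ℕ → ℕ)
    (hk : 1 ≤ k) (hkn : k < n)
    (hmono : ∀ i, 1 ≤ i → i < n → lam (i + 1) ≤ lam i)
    (hlast : lam n = 0) (h2 : 2 ≤ lam k) :
    ((n : ℚ) * ((n : ℚ) + 1)) / (((n : ℚ) - (k : ℚ)) * ((n : ℚ) - (k : ℚ) + 1)) ≤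
      ∏ p ∈ Finset.Icc 1 k ×ˢ Finset.Icc (k + 1) n,
        (((lam p.1 : ℚ) - (lam p.2 : ℚ) + (p.2 : ℚ) - (p.1 : ℚ)) /
          ((p.2 : ℚ) - (p.1 : ℚ))) :=
  weyl_product_bound_lambda_k_ge_two_general n k lam hkn hmono hlast h2
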